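/- arXiv:1304.3159 — 5 statements merged into one kernel-verified Lean document; each statement's English description precedes it below -/
import Mathlib

section
/- Let n ≥ 1 and let A and B be n×n real matrices. Then the Strang splitting approximation is locally third-order accurate: there exists a constant C ≥ 0 such that for all t ∈ [0,1], ‖exp(t·(A+B)) − exp((t/2)·A)·exp(t·B)·exp((t/2)·A)‖ ≤ C·t³, where ‖·‖ is any fixed norm on n×n matrices (e.g., the Frobenius norm). -/
/-!
The error `E(t) = exp (t • (A + B)) - exp ((t/2) • A) * exp (t • B) * exp ((t/2) • A)` is a smooth
curve with `E 0 = 0`, and by the Leibniz rule the first two derivatives of the splitting at `0`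
are `a + b + a` and `(a + b + a) ^ 2` with `a = A/2`, `b = B`, exactly those of the exact flow.
So `E` vanishes to second order at `0`, and Taylor's theorem with remainder bounds it by `C t³`.
-/

open Set NormedSpace
open scoped ContDiff

theorem exists_norm_le_mul_pow_of_iteratedDeriv_eq_zero {E : Type*} [NormedAddCommGroup E]
    [NormedSpace ℝ E] {g : ℝ → E} {a b : ℝ} {n : ℕ} (hab : a < b) (hg : ContDiff ℝ (n + 1) g)
    (hg_a : ∀ k ≤ n, iteratedDeriv k g a = 0) :
    ∃ C, 0 ≤ C ∧ ∀ t ∈ Icc a b, ‖g t‖ ≤ C * (t - a) ^ (n + 1) := by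
  have htaylor : ∀ t, taylorWithinEval g n (Icc a b) a t = 0 := by
    intro t
    rw [taylor_within_apply]
    refine Finset.sum_eq_zero fun k hk => ?_
    have hkn : k ≤ n := Nat.lt_succ_iff.mp (Finset.mem_range.mp hk)
    rw [iteratedDerivWithin_eq_iteratedDeriv (uniqueDiffOn_Icc hab)
      ((hg.of_le (by exact_mod_cast hkn.trans n.le_succ)).contDiffAt) (left_mem_Icc.2 hab.le),
      hg_a k hkn, smul_zero]
  obtain ⟨C, hC⟩ := exists_taylor_mean_remainder_bound hab.le hg.contDiffOn
  refine ⟨max C 0, le_max_right _ _, fun t ht => ?_⟩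
  have hpow : 0 ≤ (t - a) ^ (n + 1) := pow_nonneg (sub_nonneg.2 ht.1) _
  calc ‖g t‖ ≤ C * (t - a) ^ (n + 1) := by simpa [htaylor] using hC t ht
    _ ≤ max C 0 * (t - a) ^ (n + 1) := by gcongr; exact le_max_left _ _

section Exponential

variable {𝔸 : Type*} [NormedRing 𝔸] [NormedAlgebra ℝ 𝔸] [CompleteSpace 𝔸]

theorem contDiff_exp_smul (X : 𝔸) {n : WithTop ℕ∞} : ContDiff ℝ n fun t : ℝ => exp (t • X) :=
  contDiff_iff_contDiffAt.mpr fun t =>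
    (exp_analytic (t • X)).contDiffAt.comp t (contDiff_id.smul contDiff_const).contDiffAt

theorem iteratedDeriv_exp_smul (X : 𝔸) (k : ℕ) :
    iteratedDeriv k (fun t : ℝ => exp (t • X)) = fun t => exp (t • X) * X ^ k := by
  induction k with
  | zero => simp
  | succ k ih =>
    rw [iteratedDeriv_succ, ih]
    funext t
    rw [((hasDerivAt_exp_smul_const X t).mul_const (X ^ k)).deriv, mul_assoc, ← pow_succ']

theorem iteratedDeriv_exp_smul_mul_exp_smul_mul_exp_smul_zero (a b : 𝔸) {k : ℕ} (hk : k ≤ 2) :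
    iteratedDeriv k (fun t : ℝ => exp (t • a) * exp (t • b) * exp (t • a)) 0 = (a + b + a) ^ k := by
  rw [iteratedDeriv_fun_mul ((contDiff_exp_smul a).mul (contDiff_exp_smul b)).contDiffAt
    (contDiff_exp_smul a).contDiffAt]
  interval_cases k <;>
    simp only [Finset.sum_range_succ, iteratedDeriv_fun_mul, (contDiff_exp_smul _).contDiffAt,
      iteratedDeriv_exp_smul] <;>
    norm_num
  · abel
  · noncomm_ring

theorem exists_norm_exp_sub_strang_le (A B : 𝔸) :
    ∃ C, 0 ≤ C ∧ ∀ t ∈ Icc (0 : ℝ) 1,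
      ‖exp (t • (A + B)) - exp ((t / 2) • A) * exp (t • B) * exp ((t / 2) • A)‖ ≤ C * t ^ 3 := by
  set a : 𝔸 := (2⁻¹ : ℝ) • A
  have hhalf : ∀ t : ℝ, (t / 2) • A = t • a := fun t => by rw [smul_smul, div_eq_mul_inv]
  have hsum : A + B = a + B + a := by module
  simp only [hhalf, hsum]
  have hS : ContDiff ℝ ω fun t : ℝ => exp (t • a) * exp (t • B) * exp (t • a) :=
    ((contDiff_exp_smul a).mul (contDiff_exp_smul B)).mul (contDiff_exp_smul a)
  obtain ⟨C, hC0, hC⟩ := exists_norm_le_mul_pow_of_iteratedDeriv_eq_zero (n := 2) zero_lt_one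
    ((contDiff_exp_smul (a + B + a)).sub (hS.of_le le_top)) fun k hk => by
      rw [iteratedDeriv_fun_sub (contDiff_exp_smul _).contDiffAt (hS.of_le le_top).contDiffAt,
        iteratedDeriv_exp_smul, iteratedDeriv_exp_smul_mul_exp_smul_mul_exp_smul_zero a B hk]
      simp
  exact ⟨C, hC0, fun t ht => by simpa only [sub_zero] using hC t ht⟩

end Exponential

open Matrix

attribute [local instance] Matrix.frobeniusNormedAddCommGroup

theorem stmt_2_general (n : ℕ) (A B : Matrix (Fin n) (Fin n) ℝ) :
    ∃ C : ℝ, 0 ≤ C ∧ ∀ t ∈ Set.Icc (0 : ℝ) 1,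
      ‖NormedSpace.exp (t • (A + B)) -
          NormedSpace.exp ((t / 2) • A) * NormedSpace.exp (t • B) *
            NormedSpace.exp ((t / 2) • A)‖ ≤ C * t ^ 3 := by
  let _ : NormedRing (Matrix (Fin n) (Fin n) ℝ) := Matrix.frobeniusNormedRing
  let _ : NormedAlgebra ℝ (Matrix (Fin n) (Fin n) ℝ) := Matrix.frobeniusNormedAlgebra
  exact exists_norm_exp_sub_strang_le A B

/-- Strang's symmetric splitting is locally third-order accurate: there is a constant `C ≥ 0`
such that for all `t ∈ [0,1]`,
`‖exp (t•(A+B)) - exp ((t/2)•A) * exp (t•B) * exp ((t/2)•A)‖ ≤ C * t³`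
(in the Frobenius norm on `n × n` real matrices). -/
theorem stmt_2 (n : ℕ) (hn : 1 ≤ n) (A B : Matrix (Fin n) (Fin n) ℝ) :
    ∃ C : ℝ, 0 ≤ C ∧ ∀ t ∈ Set.Icc (0 : ℝ) 1,
      ‖NormedSpace.exp (t • (A + B)) -
          NormedSpace.exp ((t / 2) • A) * NormedSpace.exp (t • B) *
            NormedSpace.exp ((t / 2) • A)‖ ≤ C * t ^ 3 :=
  stmt_2_general n A B
end

section
/- Let α < 2 be a real number with α ≠ 0 and α ≠ 1, let ν_L > 0 be real, and let z ∈ ℂ satisfy Re(z) > −ν_L. Then ∫_{−∞}^0 [e^{yz} − 1 − (e^y − 1)·z] · e^{ν_L y} · |y|^{−1−α} dy = Γ(−α)·[ (ν_L + z)^α − ν_L^α + ( ν_L^α − (ν_L + 1)^α )·z ], where Γ is the Gamma function and w^α denotes the principal complex power. (This is the symbol identity underlying the operator ℒ_L = λ_L Γ(−α_L)[ (ν_L + ∇)^{α_L} − ν_L^{α_L} + (ν_L^{α_L} − (ν_L+1)^{α_L})∇ ] for the left tail of the GTSP/CGMY/KoBoL model.) -/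
/-!
After `y = -t` the integrand is `c₁ e^{-(ν+z)t} + c₂ e^{-(ν+1)t} + c₃ e^{-νt}` times `t^{-1-α}`,
with weights `(c₁, c₂, c₃) = (1, -z, z - 1)`. These weights annihilate every affine function of
the rate, so each exponential may be replaced by its Taylor remainder of order `n ∈ {0, 1, 2}`,
where `α < n` and, if `n > 0`, `n - 1 < α`; then every term converges separately. For a rate `w` with `Re w > 0`,
`∫₀^∞ (e^{-wt} - ∑_{j<n} (-wt)^j/j!) t^{-1-α} dt = Γ(-α) w^α`: for `n = 0` this is Euler's
integral, carried from real to complex `w` by the identity theorem, and one integration by parts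
lowers `n` and `α` by one, using `Γ(1 - α) = -α Γ(-α)`.
-/

open MeasureTheory Set Filter Topology
open scoped Complex

section PowerBounds

variable {E : Type*} [NormedAddCommGroup E] {g : ℝ → E} {δ C : ℝ}

lemma integrableOn_Ioi_of_norm_le_rpow {a b C' : ℝ} (hδ : 0 < δ) (hg : ContinuousOn g (Ioi 0))
    (ha : -1 < a) (hb : b < -1) (hsmall : ∀ t ∈ Ioc 0 δ, ‖g t‖ ≤ C * t ^ a)
    (hlarge : ∀ t ∈ Ioi δ, ‖g t‖ ≤ C' * t ^ b) : IntegrableOn g (Ioi 0) := by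
  rw [← Ioc_union_Ioi_eq_Ioi hδ.le]
  refine IntegrableOn.union ?_ ?_
  · refine Integrable.mono' (((intervalIntegrable_iff_integrableOn_Ioc_of_le hδ.le).mp
      (intervalIntegral.intervalIntegrable_rpow' ha)).const_mul C)
      ((hg.mono Ioc_subset_Ioi_self).aestronglyMeasurable measurableSet_Ioc) ?_
    exact ae_restrict_of_forall_mem measurableSet_Ioc hsmall
  · refine Integrable.mono' ((integrableOn_Ioi_rpow_of_lt hb hδ).const_mul C')
      ((hg.mono (Ioi_subset_Ioi hδ.le)).aestronglyMeasurable measurableSet_Ioi) ?_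
    exact ae_restrict_of_forall_mem measurableSet_Ioi hlarge

lemma tendsto_nhdsGT_zero_of_norm_le_rpow {a : ℝ} (hδ : 0 < δ) (ha : 0 < a)
    (h : ∀ t ∈ Ioc 0 δ, ‖g t‖ ≤ C * t ^ a) : Tendsto g (𝓝[>] 0) (𝓝 0) := by
  refine squeeze_zero_norm' (f := g) (a := fun t => C * t ^ a) ?_ ?_
  · filter_upwards [Ioc_mem_nhdsGT hδ] with t ht using h t ht
  · simpa [Real.zero_rpow ha.ne'] using
      ((Real.continuousAt_rpow_const 0 a (Or.inr ha.le)).tendsto.mono_left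
        nhdsWithin_le_nhds).const_mul C

lemma tendsto_atTop_zero_of_norm_le_rpow {b : ℝ} (hb : b < 0)
    (h : ∀ t ∈ Ioi δ, ‖g t‖ ≤ C * t ^ b) : Tendsto g atTop (𝓝 0) := by
  refine squeeze_zero_norm' (f := g) (a := fun t => C * t ^ b) ?_ ?_
  · filter_upwards [Ioi_mem_atTop δ] with t ht using h t ht
  · simpa using (tendsto_rpow_neg_atTop (neg_pos.mpr hb)).const_mul C

end PowerBounds

lemma norm_neg_mul_ofReal (w : ℂ) {t : ℝ} (ht : 0 ≤ t) : ‖-(w * t)‖ = ‖w‖ * t := by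
  rw [norm_neg, norm_mul, Complex.norm_real, Real.norm_of_nonneg ht]

lemma norm_cexp_neg_mul_ofReal (w : ℂ) (t : ℝ) :
    ‖cexp (-(w * t))‖ = Real.exp (-(w.re * t)) := by
  simp [Complex.norm_exp, Complex.mul_re]

lemma norm_mul_ofReal_rpow {x : ℂ} {t : ℝ} (ht : 0 < t) (s : ℝ) :
    ‖x * ((t ^ s : ℝ) : ℂ)‖ = ‖x‖ * t ^ s := by
  rw [norm_mul, Complex.norm_real, Real.norm_of_nonneg (Real.rpow_nonneg ht.le s)]

lemma continuousOn_comp_neg_mul_mul_rpow {f : ℂ → ℂ} (hf : Continuous f) (w : ℂ) (s : ℝ) :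
    ContinuousOn (fun t : ℝ => f (-(w * t)) * ((t ^ s : ℝ) : ℂ)) (Ioi 0) := by
  refine (by fun_prop : Continuous fun t : ℝ => f (-(w * t))).continuousOn.mul ?_
  exact Complex.continuous_ofReal.comp_continuousOn
    (continuousOn_id.rpow_const fun t ht => Or.inl (ne_of_gt ht))

section GammaIntegral

lemma integrableOn_cexp_neg_mul_mul_rpow {s : ℝ} (hs : -1 < s) {w : ℂ} (hw : 0 < w.re) :
    IntegrableOn (fun t : ℝ => cexp (-(w * t)) * ((t ^ s : ℝ) : ℂ)) (Ioi 0) := by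
  refine Integrable.mono' (integrableOn_rpow_mul_exp_neg_mul_rpow hs one_pos hw)
    ((continuousOn_comp_neg_mul_mul_rpow Complex.continuous_exp w s).aestronglyMeasurable
      measurableSet_Ioi) ?_
  filter_upwards [ae_restrict_mem measurableSet_Ioi] with t (ht : 0 < t)
  rw [norm_mul_ofReal_rpow ht, norm_cexp_neg_mul_ofReal, Real.rpow_one, mul_comm, neg_mul]

lemma differentiableOn_integral_cexp_neg_mul_mul_rpow {s : ℝ} (hs : -1 < s) :
    DifferentiableOn ℂ (fun w : ℂ => ∫ t in Ioi (0 : ℝ), cexp (-(w * t)) * ((t ^ s : ℝ) : ℂ))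
      {w | 0 < w.re} := by
  intro w₀ (hw₀ : 0 < w₀.re)
  have hre : ∀ w ∈ Metric.ball w₀ (w₀.re / 2), w₀.re / 2 ≤ w.re := fun w hw => by
    have := (Complex.abs_re_le_norm (w - w₀)).trans (mem_ball_iff_norm.mp hw).le
    rw [Complex.sub_re] at this
    linarith [neg_abs_le (w.re - w₀.re)]
  have hbound := (integrableOn_cexp_neg_mul_mul_rpow (s := s + 1) (by linarith)
    (w := ((w₀.re / 2 : ℝ) : ℂ)) (by simpa using hw₀)).norm
  have hcont := fun w => continuousOn_comp_neg_mul_mul_rpow Complex.continuous_exp w s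
  refine (hasDerivAt_integral_of_dominated_loc_of_deriv_le
    (F' := fun w (t : ℝ) => -(t : ℂ) * (cexp (-(w * t)) * ((t ^ s : ℝ) : ℂ)))
    (Metric.ball_mem_nhds w₀ (half_pos hw₀))
    (Eventually.of_forall fun w => (hcont w).aestronglyMeasurable measurableSet_Ioi)
    (integrableOn_cexp_neg_mul_mul_rpow hs hw₀)
    ((Complex.continuous_ofReal.neg.continuousOn.mul (hcont w₀)).aestronglyMeasurable
      measurableSet_Ioi)
    ?_ hbound ?_).2.differentiableAt.differentiableWithinAt
  · filter_upwards [ae_restrict_mem measurableSet_Ioi] with t (ht : 0 < t) w hw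
    rw [norm_mul, norm_neg, Complex.norm_real, Real.norm_of_nonneg ht.le, norm_mul_ofReal_rpow ht,
      norm_mul_ofReal_rpow ht, norm_cexp_neg_mul_ofReal, norm_cexp_neg_mul_ofReal,
      Real.rpow_add_one ht.ne', Complex.ofReal_re]
    have : Real.exp (-(w.re * t)) ≤ Real.exp (-(w₀.re / 2 * t)) := by
      gcongr
      exact hre w hw
    calc t * (Real.exp (-(w.re * t)) * t ^ s) ≤ t * (Real.exp (-(w₀.re / 2 * t)) * t ^ s) := by
          gcongr
      _ = _ := by ring
  · filter_upwards with t w _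
    exact (((hasDerivAt_id w).mul_const (t : ℂ)).neg.cexp.mul_const ((t ^ s : ℝ) : ℂ)).congr_deriv
      (by simp only [id, Pi.neg_apply]; ring)

lemma integral_cexp_neg_mul_ofReal_mul_rpow {α : ℝ} (hα : α < 0) {r : ℝ} (hr : 0 < r) :
    ∫ t in Ioi (0 : ℝ), cexp (-(r * t)) * ((t ^ (-1 - α) : ℝ) : ℂ)
      = Real.Gamma (-α) * (r : ℂ) ^ (α : ℂ) := by
  have h := Complex.integral_cpow_mul_exp_neg_mul_Ioi (a := ((-α : ℝ) : ℂ)) (by simpa using hα) hr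
  rw [Complex.Gamma_ofReal, ← Complex.ofReal_one, ← Complex.ofReal_div,
    ← Complex.ofReal_cpow (by positivity), one_div, Real.inv_rpow hr.le, ← Real.rpow_neg hr.le,
    neg_neg, Complex.ofReal_cpow hr.le, mul_comm] at h
  rw [← h]
  refine setIntegral_congr_fun measurableSet_Ioi fun t (ht : 0 < t) => ?_
  rw [Complex.ofReal_cpow ht.le, mul_comm]
  push_cast
  ring_nf

lemma integral_cexp_neg_mul_mul_rpow {α : ℝ} (hα : α < 0) {w : ℂ} (hw : 0 < w.re) :
    ∫ t in Ioi (0 : ℝ), cexp (-(w * t)) * ((t ^ (-1 - α) : ℝ) : ℂ)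
      = Real.Gamma (-α) * w ^ (α : ℂ) := by
  -- both sides are holomorphic on the right half-plane and agree on `(0, ∞)`
  have hU : IsPreconnected {w : ℂ | 0 < w.re} := (convex_halfSpace_re_gt 0).isPreconnected
  have hopen : IsOpen {w : ℂ | 0 < w.re} := isOpen_lt continuous_const Complex.continuous_re
  have hlhs := (differentiableOn_integral_cexp_neg_mul_mul_rpow (s := -1 - α) (by linarith)
    ).analyticOnNhd hopen
  have hrhs : DifferentiableOn ℂ (fun w : ℂ => (Real.Gamma (-α) : ℂ) * w ^ (α : ℂ))
      {w | 0 < w.re} := fun w hw =>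
    ((differentiableAt_id.cpow_const (Or.inl hw)).const_mul _).differentiableWithinAt
  have hreal : ∀ᶠ r : ℝ in 𝓝[≠] 1, ∫ t in Ioi (0 : ℝ), cexp (-(r * t)) * ((t ^ (-1 - α) : ℝ) : ℂ)
      = Real.Gamma (-α) * (r : ℂ) ^ (α : ℂ) := by
    filter_upwards [nhdsWithin_le_nhds (Ioi_mem_nhds one_pos)] with r hr
    exact integral_cexp_neg_mul_ofReal_mul_rpow hα hr
  have hofReal : Tendsto (fun r : ℝ => (r : ℂ)) (𝓝[≠] 1) (𝓝[≠] 1) :=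
    Complex.continuous_ofReal.continuousWithinAt.tendsto_nhdsWithin fun r hr => by simpa using hr
  exact hlhs.eqOn_of_preconnected_of_frequently_eq (hrhs.analyticOnNhd hopen) hU
    (by simp) (hofReal.frequently hreal.frequently) hw

end GammaIntegral

section TaylorRemainder

noncomputable def expTaylorRemainder (n : ℕ) (x : ℂ) : ℂ :=
  cexp x - ∑ j ∈ Finset.range n, x ^ j / j.factorial

lemma expTaylorRemainder_zero (x : ℂ) : expTaylorRemainder 0 x = cexp x := by
  simp [expTaylorRemainder]

lemma expTaylorRemainder_succ (n : ℕ) (x : ℂ) :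
    expTaylorRemainder (n + 1) x = expTaylorRemainder n x - x ^ n / n.factorial := by
  simp only [expTaylorRemainder, Finset.sum_range_succ]
  ring

lemma continuous_expTaylorRemainder (n : ℕ) : Continuous (expTaylorRemainder n) := by
  unfold expTaylorRemainder
  fun_prop

lemma hasDerivAt_expTaylorRemainder_succ (n : ℕ) (x : ℂ) :
    HasDerivAt (expTaylorRemainder (n + 1)) (expTaylorRemainder n x) x := by
  induction n with
  | zero =>
    have h1 : expTaylorRemainder 1 = fun x => cexp x - 1 :=
      funext fun x => by simp [expTaylorRemainder]
    rw [h1, expTaylorRemainder_zero]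
    exact (Complex.hasDerivAt_exp x).sub_const 1
  | succ n ih =>
    have hpow : HasDerivAt (fun x : ℂ => x ^ (n + 1) / (n + 1).factorial)
        (x ^ n / n.factorial) x := by
      refine ((hasDerivAt_pow (n + 1) x).div_const _).congr_deriv ?_
      rw [Nat.factorial_succ]
      push_cast
      field_simp
    rw [funext (expTaylorRemainder_succ (n + 1)), expTaylorRemainder_succ n]
    exact ih.sub hpow

lemma norm_expTaylorRemainder_le_of_norm_le_one (n : ℕ) {x : ℂ} (hx : ‖x‖ ≤ 1) :
    ‖expTaylorRemainder n x‖ ≤ Real.exp 1 * ‖x‖ ^ n :=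
  (Complex.norm_exp_sub_sum_le_norm_mul_exp x n).trans (by rw [mul_comm]; gcongr)

lemma norm_expTaylorRemainder_succ_le_of_re_nonpos (n : ℕ) {x : ℂ} (hre : x.re ≤ 0)
    (hx : 1 ≤ ‖x‖) : ‖expTaylorRemainder (n + 1) x‖ ≤ (n + 2) * ‖x‖ ^ n := by
  have hterm : ∀ j ∈ Finset.range (n + 1), ‖x ^ j / j.factorial‖ ≤ ‖x‖ ^ n := fun j hj => by
    rw [norm_div, norm_pow, Complex.norm_natCast]
    exact (div_le_self (by positivity) (mod_cast j.factorial_pos)).trans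
      (pow_le_pow_right₀ hx (Finset.mem_range_succ_iff.mp hj))
  calc ‖expTaylorRemainder (n + 1) x‖
      ≤ ‖cexp x‖ + ∑ j ∈ Finset.range (n + 1), ‖x ^ j / j.factorial‖ :=
        (norm_sub_le _ _).trans (add_le_add le_rfl (norm_sum_le _ _))
    _ ≤ ‖x‖ ^ n + ∑ j ∈ Finset.range (n + 1), ‖x‖ ^ n := by
        gcongr with j hj
        · rw [Complex.norm_exp]
          exact (Real.exp_le_one_iff.mpr hre).trans (one_le_pow₀ hx)
        · exact hterm j hj
    _ = (n + 2) * ‖x‖ ^ n := by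
        rw [Finset.sum_const, Finset.card_range, nsmul_eq_mul]
        push_cast
        ring

variable {w : ℂ} {t : ℝ}

lemma norm_expTaylorRemainder_neg_mul_mul_rpow_le_of_le (n : ℕ) (s : ℝ)
    (ht : t ∈ Ioc 0 ‖w‖⁻¹) :
    ‖expTaylorRemainder n (-(w * t)) * ((t ^ s : ℝ) : ℂ)‖
      ≤ Real.exp 1 * ‖w‖ ^ n * t ^ ((n : ℝ) + s) := by
  obtain ⟨ht0, htw⟩ := ht
  have hwt : ‖-(w * t)‖ ≤ 1 := by
    rw [norm_neg_mul_ofReal w ht0.le]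
    calc ‖w‖ * t ≤ ‖w‖ * ‖w‖⁻¹ := by gcongr
      _ ≤ 1 := mul_inv_le_one
  rw [norm_mul_ofReal_rpow ht0, Real.rpow_add ht0, Real.rpow_natCast]
  calc ‖expTaylorRemainder n (-(w * t))‖ * t ^ s ≤ Real.exp 1 * (‖w‖ * t) ^ n * t ^ s := by
        rw [← norm_neg_mul_ofReal w ht0.le]
        have := norm_expTaylorRemainder_le_of_norm_le_one n hwt
        gcongr
    _ = _ := by ring

lemma norm_expTaylorRemainder_neg_mul_mul_rpow_le_of_gt (n : ℕ) (s : ℝ) (hw : 0 < w.re)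
    (ht : t ∈ Ioi ‖w‖⁻¹) :
    ‖expTaylorRemainder (n + 1) (-(w * t)) * ((t ^ s : ℝ) : ℂ)‖
      ≤ (n + 2) * ‖w‖ ^ n * t ^ ((n : ℝ) + s) := by
  have hw0 : 0 < ‖w‖ := hw.trans_le (Complex.re_le_norm w)
  have ht0 : 0 < t := (inv_pos.mpr hw0).trans ht
  have hwt : 1 ≤ ‖-(w * t)‖ := by
    rw [norm_neg_mul_ofReal w ht0.le]
    exact ((inv_lt_iff_one_lt_mul₀' hw0).mp ht).le
  have hre : (-(w * t)).re ≤ 0 := by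
    simp only [Complex.neg_re, Complex.re_mul_ofReal]
    exact neg_nonpos.mpr (mul_nonneg hw.le ht0.le)
  rw [norm_mul_ofReal_rpow ht0, Real.rpow_add ht0, Real.rpow_natCast]
  calc ‖expTaylorRemainder (n + 1) (-(w * t))‖ * t ^ s ≤ (n + 2) * (‖w‖ * t) ^ n * t ^ s := by
        rw [← norm_neg_mul_ofReal w ht0.le]
        have := norm_expTaylorRemainder_succ_le_of_re_nonpos n hre hwt
        gcongr
    _ = _ := by ring

end TaylorRemainder

section RemainderIntegral

lemma integrableOn_expTaylorRemainder_mul_rpow {n : ℕ} {α : ℝ} (hαn : α < n)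
    (hnα : n = 0 ∨ (n : ℝ) - 1 < α) {w : ℂ} (hw : 0 < w.re) :
    IntegrableOn (fun t : ℝ => expTaylorRemainder n (-(w * t)) * ((t ^ (-1 - α) : ℝ) : ℂ))
      (Ioi 0) := by
  rcases n with _ | n
  · simp only [expTaylorRemainder_zero]
    exact integrableOn_cexp_neg_mul_mul_rpow (by simp at hαn; linarith) hw
  · have hnα' := hnα.resolve_left n.succ_ne_zero
    push_cast at hαn hnα'
    refine integrableOn_Ioi_of_norm_le_rpow (inv_pos.mpr (hw.trans_le (Complex.re_le_norm w)))
      (continuousOn_comp_neg_mul_mul_rpow (continuous_expTaylorRemainder _) w _) ?_ ?_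
      (fun t ht => norm_expTaylorRemainder_neg_mul_mul_rpow_le_of_le (n + 1) _ ht)
      (fun t ht => norm_expTaylorRemainder_neg_mul_mul_rpow_le_of_gt n _ hw ht)
    · push_cast; linarith
    · linarith

/- Integration by parts against `d(t^{-α} / (-α)) = t^{-1-α} dt`; the boundary terms vanish
because the remainder of order `n + 1` is `O(t^{n+1})` at `0` and `O(t^n)` at `∞`. -/
lemma integral_expTaylorRemainder_succ_mul_rpow {n : ℕ} {α : ℝ} (hnα : n < α) (hαn : α < n + 1)
    {w : ℂ} (hw : 0 < w.re) :
    ∫ t in Ioi (0 : ℝ), expTaylorRemainder (n + 1) (-(w * t)) * ((t ^ (-1 - α) : ℝ) : ℂ)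
      = -(w / α) *
        ∫ t in Ioi (0 : ℝ), expTaylorRemainder n (-(w * t)) * ((t ^ (-1 - (α - 1)) : ℝ) : ℂ) := by
  have hα : (α : ℂ) ≠ 0 := Complex.ofReal_ne_zero.mpr (n.cast_nonneg.trans_lt hnα).ne'
  have hδ : 0 < ‖w‖⁻¹ := inv_pos.mpr (hw.trans_le (Complex.re_le_norm w))
  have hu : ∀ t ∈ Ioi (0 : ℝ), HasDerivAt (fun t : ℝ => expTaylorRemainder (n + 1) (-(w * t)))
      (-w * expTaylorRemainder n (-(w * t))) t := fun t _ => by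
    have := (hasDerivAt_expTaylorRemainder_succ n _).comp (t : ℂ)
      ((hasDerivAt_id (t : ℂ)).const_mul w).neg
    exact this.comp_ofReal.congr_deriv (by simp only [id, mul_one, Pi.neg_apply]; ring)
  have hv : ∀ t ∈ Ioi (0 : ℝ), HasDerivAt (fun t : ℝ => ((t ^ (-α) : ℝ) : ℂ) / (-α : ℂ))
      ((t ^ (-1 - α) : ℝ) : ℂ) t := fun t (ht : 0 < t) => by
    refine ((Real.hasDerivAt_rpow_const (p := -α) (Or.inl ht.ne')).ofReal_comp.div_const
      _).congr_deriv ?_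
    rw [show -α - 1 = -1 - α by ring]
    push_cast
    field_simp
  have hint := integrableOn_expTaylorRemainder_mul_rpow (n := n) (α := α - 1) (by linarith)
    (Or.inr (by linarith)) hw
  have h_zero := (tendsto_nhdsGT_zero_of_norm_le_rpow hδ (by push_cast; linarith)
    fun t ht => norm_expTaylorRemainder_neg_mul_mul_rpow_le_of_le (n + 1) (-α) ht).div_const
    (-α : ℂ)
  have h_infty := (tendsto_atTop_zero_of_norm_le_rpow (by linarith)
    fun t ht => norm_expTaylorRemainder_neg_mul_mul_rpow_le_of_gt n (-α) hw ht).div_const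
    (-α : ℂ)
  rw [zero_div] at h_zero h_infty
  have hIBP := integral_Ioi_mul_deriv_eq_deriv_mul hu hv
    (integrableOn_expTaylorRemainder_mul_rpow (n := n + 1) (by push_cast; linarith)
      (Or.inr (by push_cast; linarith)) hw)
    (IntegrableOn.congr_fun (hint.const_mul (w / α)) (fun t _ => by
      simp only [Pi.mul_apply, show -1 - (α - 1) = -α by ring]; field_simp) measurableSet_Ioi)
    (by simpa only [Pi.mul_def, mul_div_assoc] using h_zero)
    (by simpa only [Pi.mul_def, mul_div_assoc] using h_infty)
  rw [hIBP, sub_self, zero_sub, ← integral_neg, ← integral_const_mul]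
  refine setIntegral_congr_fun measurableSet_Ioi fun t _ => ?_
  rw [show -1 - (α - 1) = -α by ring]
  field_simp

lemma neg_div_mul_Gamma_mul_cpow_sub_one {α : ℝ} (hα : α ≠ 0) {w : ℂ} (hw : w ≠ 0) :
    -(w / α) * (Real.Gamma (-(α - 1)) * w ^ ((α - 1 : ℝ) : ℂ))
      = Real.Gamma (-α) * w ^ (α : ℂ) := by
  rw [show -(α - 1) = -α + 1 by ring, Real.Gamma_add_one (neg_ne_zero.mpr hα)]
  push_cast
  rw [Complex.cpow_sub _ _ hw, Complex.cpow_one]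
  have : (α : ℂ) ≠ 0 := Complex.ofReal_ne_zero.mpr hα
  field_simp

theorem integral_expTaylorRemainder_mul_rpow (n : ℕ) {α : ℝ} (hαn : α < n)
    (hnα : n = 0 ∨ (n : ℝ) - 1 < α) {w : ℂ} (hw : 0 < w.re) :
    ∫ t in Ioi (0 : ℝ), expTaylorRemainder n (-(w * t)) * ((t ^ (-1 - α) : ℝ) : ℂ)
      = Real.Gamma (-α) * w ^ (α : ℂ) := by
  induction n generalizing α with
  | zero =>
    simp only [expTaylorRemainder_zero]
    exact integral_cexp_neg_mul_mul_rpow (by simpa using hαn) hw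
  | succ n ih =>
    have hnα' := hnα.resolve_left n.succ_ne_zero
    push_cast at hαn hnα'
    rw [integral_expTaylorRemainder_succ_mul_rpow (by linarith) hαn hw,
      ih (by linarith) (Or.inr (by linarith))]
    exact neg_div_mul_Gamma_mul_cpow_sub_one (n.cast_nonneg.trans_lt (by linarith)).ne'
      (norm_pos_iff.mp (hw.trans_le (Complex.re_le_norm w)))

end RemainderIntegral

/- The weights `1, -z, z - 1` at the rates `ν + z, ν + 1, ν` annihilate affine functions of the
rate, so the Taylor polynomials of degree `< 2` cancel. -/
lemma expTaylorRemainder_combination {n : ℕ} (hn : n ≤ 2) (ν z x : ℂ) :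
    expTaylorRemainder n (-((ν + z) * x)) - z * expTaylorRemainder n (-((ν + 1) * x))
        + (z - 1) * expTaylorRemainder n (-(ν * x))
      = (cexp (-x * z) - 1 - (cexp (-x) - 1) * z) * cexp (-(ν * x)) := by
  have h₁ : cexp (-((ν + z) * x)) = cexp (-x * z) * cexp (-(ν * x)) := by
    rw [← Complex.exp_add]; ring_nf
  have h₂ : cexp (-((ν + 1) * x)) = cexp (-x) * cexp (-(ν * x)) := by
    rw [← Complex.exp_add]; ring_nf
  interval_cases n <;>
    simp [expTaylorRemainder, Finset.sum_range_succ, h₁, h₂] <;> ring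

lemma integral_compensated_cexp_mul_rpow {n : ℕ} (hn : n ≤ 2) {α : ℝ} (hαn : α < n)
    (hnα : n = 0 ∨ (n : ℝ) - 1 < α) {ν z : ℂ} (hν : 0 < ν.re) (hνz : 0 < (ν + z).re) :
    ∫ t in Ioi (0 : ℝ),
        (cexp (-t * z) - 1 - (cexp (-t) - 1) * z) * cexp (-(ν * t)) * ((t ^ (-1 - α) : ℝ) : ℂ)
      = Real.Gamma (-α) *
          ((ν + z) ^ (α : ℂ) - ν ^ (α : ℂ) + (ν ^ (α : ℂ) - (ν + 1) ^ (α : ℂ)) * z) := by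
  have hν1 : 0 < (ν + 1).re := by simp only [Complex.add_re, Complex.one_re]; linarith
  set I : ℂ → ℝ → ℂ := fun w t => expTaylorRemainder n (-(w * t)) * ((t ^ (-1 - α) : ℝ) : ℂ)
  have hI : ∀ w : ℂ, 0 < w.re → IntegrableOn (I w) (Ioi 0) := fun w hw =>
    integrableOn_expTaylorRemainder_mul_rpow hαn hnα hw
  have hI₁₂ : IntegrableOn (fun t => I (ν + z) t - z * I (ν + 1) t) (Ioi 0) :=
    (hI _ hνz).sub ((hI _ hν1).const_mul z)
  have hsplit : (fun t : ℝ =>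
      (cexp (-t * z) - 1 - (cexp (-t) - 1) * z) * cexp (-(ν * t)) * ((t ^ (-1 - α) : ℝ) : ℂ))
      = fun t => I (ν + z) t - z * I (ν + 1) t + (z - 1) * I ν t := by
    ext t
    simp only [I, ← expTaylorRemainder_combination hn ν z t]
    ring
  rw [hsplit, integral_add hI₁₂ ((hI _ hν).const_mul _), integral_sub (hI _ hνz)
    ((hI _ hν1).const_mul z), integral_const_mul, integral_const_mul]
  simp only [I]
  rw [integral_expTaylorRemainder_mul_rpow n hαn hnα hνz,
    integral_expTaylorRemainder_mul_rpow n hαn hnα hν1,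
    integral_expTaylorRemainder_mul_rpow n hαn hnα hν]
  ring

lemma integral_Iio_zero_eq_integral_Ioi_comp_neg {E : Type*} [NormedAddCommGroup E]
    [NormedSpace ℝ E] (f : ℝ → E) : ∫ y in Iio (0 : ℝ), f y = ∫ t in Ioi (0 : ℝ), f (-t) := by
  rw [integral_comp_neg_Ioi, neg_zero, integral_Iic_eq_integral_Iio]

/-- Symbol identity for the left tail of the GTSP/CGMY/KoBoL model: for `α < 2`,
`α ≠ 0`, `α ≠ 1`, `ν_L > 0` and `Re z > -ν_L`,
`∫_{-∞}^0 [e^{yz} - 1 - (e^y - 1) z] e^{ν_L y} |y|^{-1-α} dy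
  = Γ(-α) [(ν_L + z)^α - ν_L^α + (ν_L^α - (ν_L + 1)^α) z]`,
where powers of complex numbers are principal powers. -/
theorem stmt_7 (α νL : ℝ) (hα : α < 2) (hα0 : α ≠ 0) (hα1 : α ≠ 1) (hν : 0 < νL)
    (z : ℂ) (hz : -νL < z.re) :
    ∫ y in Set.Iio (0 : ℝ),
        (Complex.exp ((y : ℂ) * z) - 1 - (Complex.exp (y : ℂ) - 1) * z) *
          ((Real.exp (νL * y) * |y| ^ (-1 - α) : ℝ) : ℂ)
      = (Real.Gamma (-α) : ℂ) *
          (((νL : ℂ) + z) ^ (α : ℂ) - (νL : ℂ) ^ (α : ℂ) +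
            ((νL : ℂ) ^ (α : ℂ) - ((νL : ℂ) + 1) ^ (α : ℂ)) * z) := by
  obtain ⟨n, hn2, hαn, hnα⟩ : ∃ n : ℕ, n ≤ 2 ∧ α < n ∧ (n = 0 ∨ (n : ℝ) - 1 < α) := by
    rcases hα0.lt_or_gt with h0 | h0
    · exact ⟨0, by norm_num, by simpa using h0, Or.inl rfl⟩
    rcases hα1.lt_or_gt with h1 | h1
    · exact ⟨1, by norm_num, by simpa using h1, Or.inr (by simpa using h0)⟩
    · exact ⟨2, le_rfl, by simpa using hα, Or.inr (by norm_num; linarith)⟩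
  rw [integral_Iio_zero_eq_integral_Ioi_comp_neg, ← integral_compensated_cexp_mul_rpow hn2 hαn hnα
    (ν := νL) (by simpa using hν) (by simp; linarith)]
  refine setIntegral_congr_fun measurableSet_Ioi fun t (ht : 0 < t) => ?_
  rw [abs_neg, abs_of_pos ht]
  push_cast
  ring_nf
end

section
/- Let ν > 1 be real and let z ∈ ℂ satisfy Re(z) < ν. Then ∫_0^∞ [e^{yz} − 1 − (e^y − 1)·z] · e^{−ν y} · y^{−1} dy = log ν − log(ν − z) + z·log((ν − 1)/ν), where log denotes the principal complex logarithm. (This is the α_R = 0 (Variance-Gamma type) special case of the symbol identity for ℒ_R in the GTSP/CGMY/KoBoL model.) -/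
/-!
Since `(e^{yw} - 1) / y = ∫₀¹ w e^{t y w} dt`, the integral `∫₀^∞ (e^{yw} - 1) e^{-νy} y⁻¹ dy` is the
double integral of `w e^{(tw - ν) y}` over `(0, ∞) × (0, 1]`, which converges absolutely when
`Re w < ν` because `Re (t w) ≤ max (Re w) 0`. Integrating in `y` first leaves
`∫₀¹ w / (ν - t w) dt = log ν - log (ν - w)`, as `ν - t w` stays in the right half-plane.
The integrand of the theorem is the case `w = z` minus `z` times the case `w = 1`.
-/

open MeasureTheory Set Complex

lemma re_ofReal_mul_le_max_zero {t : ℝ} (ht : t ∈ Icc (0 : ℝ) 1) (w : ℂ) :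
    ((t : ℂ) * w).re ≤ max w.re 0 := by
  rw [re_ofReal_mul]
  rcases le_total w.re 0 with h | h
  · exact (mul_nonpos_of_nonneg_of_nonpos ht.1 h).trans (le_max_right _ _)
  · exact (mul_le_of_le_one_left h ht.2).trans (le_max_left _ _)

theorem intervalIntegral_div_sub_mul {a w : ℂ}
    (h : ∀ t ∈ Icc (0 : ℝ) 1, a - t * w ∈ slitPlane) :
    ∫ t in (0 : ℝ)..1, w / (a - t * w) = log a - log (a - w) := by
  have hderiv : ∀ t ∈ uIcc (0 : ℝ) 1,
      HasDerivAt (fun s : ℝ => -log (a - s * w)) (w / (a - t * w)) t := by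
    intro t ht
    rw [uIcc_of_le zero_le_one] at ht
    have hlin := ((hasDerivAt_id (t : ℂ)).mul_const w).const_sub a
    convert ((hasDerivAt_log (h t ht)).comp (t : ℂ) hlin).neg.comp_ofReal using 1
    · rfl
    · field_simp
  have hcont : ContinuousOn (fun t : ℝ => w / (a - t * w)) (uIcc 0 1) := by
    rw [uIcc_of_le zero_le_one]
    exact continuousOn_const.div (by fun_prop) fun t ht => slitPlane_ne_zero (h t ht)
  rw [intervalIntegral.integral_eq_sub_of_hasDerivAt hderiv hcont.intervalIntegrable]
  simp only [ofReal_one, one_mul, ofReal_zero, zero_mul, sub_zero, sub_neg_eq_add]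
  ring

theorem intervalIntegral_mul_cexp_mul (w : ℂ) {y : ℝ} (hy : y ≠ 0) :
    ∫ t in (0 : ℝ)..1, w * cexp (y * w * t) = (cexp (y * w) - 1) / y := by
  rcases eq_or_ne w 0 with rfl | hw
  · simp
  rw [intervalIntegral.integral_const_mul, integral_exp_mul_complex (by simp [hy, hw])]
  field_simp
  simp

section Frullani

noncomputable def frullaniKernel (ν : ℝ) (w : ℂ) (y t : ℝ) : ℂ := w * cexp ((t * w - ν) * y)

variable {ν : ℝ} {w : ℂ}

lemma integrable_frullaniKernel (hν : 0 < ν) (hw : w.re < ν) :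
    Integrable (Function.uncurry (frullaniKernel ν w))
      ((volume.restrict (Ioi 0)).prod (volume.restrict (Ioc 0 1))) := by
  set δ := ν - max w.re 0
  have hδ : 0 < δ := sub_pos.2 (max_lt hw hν)
  have hbound : Integrable (fun p : ℝ × ℝ => ‖w‖ * Real.exp (-δ * p.1) * 1)
      ((volume.restrict (Ioi 0)).prod (volume.restrict (Ioc 0 1))) :=
    ((exp_neg_integrableOn_Ioi 0 hδ).const_mul ‖w‖).mul_prod (integrable_const 1)
  refine hbound.mono' (by unfold frullaniKernel; fun_prop) ?_
  rw [Measure.prod_restrict]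
  filter_upwards [ae_restrict_mem (measurableSet_Ioi.prod measurableSet_Ioc)]
    with ⟨y, t⟩ ⟨hy, ht⟩
  have hre := re_ofReal_mul_le_max_zero (Ioc_subset_Icc_self ht) w
  rw [Function.uncurry_apply_pair, frullaniKernel, norm_mul, norm_exp, mul_one, re_mul_ofReal,
    sub_re, ofReal_re]
  gcongr ‖w‖ * Real.exp ?_
  exact mul_le_mul_of_nonneg_right (by linarith) (le_of_lt hy)

lemma integral_Ioc_frullaniKernel {y : ℝ} (hy : y ≠ 0) :
    ∫ t in Ioc (0 : ℝ) 1, frullaniKernel ν w y t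
      = (cexp (y * w) - 1) * ((Real.exp (-ν * y) * y⁻¹ : ℝ) : ℂ) := by
  have hsplit : ∀ t, frullaniKernel ν w y t = cexp (-ν * y) * (w * cexp (y * w * t)) := by
    intro t
    rw [frullaniKernel, mul_left_comm, ← exp_add]
    ring_nf
  rw [← intervalIntegral.integral_of_le zero_le_one]
  simp only [hsplit]
  rw [intervalIntegral.integral_const_mul, intervalIntegral_mul_cexp_mul w hy]
  push_cast
  ring

lemma integral_Ioi_frullaniKernel (hν : 0 < ν) (hw : w.re < ν) {t : ℝ}
    (ht : t ∈ Icc (0 : ℝ) 1) :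
    ∫ y in Ioi (0 : ℝ), frullaniKernel ν w y t = w / (ν - t * w) := by
  have hre : ((t : ℂ) * w - ν).re < 0 := by
    rw [sub_re, ofReal_re]
    linarith [re_ofReal_mul_le_max_zero ht w, max_lt hw hν]
  simp only [frullaniKernel]
  rw [integral_const_mul, integral_exp_mul_complex_Ioi hre]
  simp only [ofReal_zero, mul_zero, exp_zero]
  rw [← neg_sub, div_neg, neg_div, neg_neg, mul_one_div]

theorem integrableOn_frullani_cexp (hν : 0 < ν) (hw : w.re < ν) :
    IntegrableOn (fun y : ℝ => (cexp (y * w) - 1) * ((Real.exp (-ν * y) * y⁻¹ : ℝ) : ℂ))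
      (Ioi 0) := by
  refine (integrable_frullaniKernel hν hw).integral_prod_left.congr ?_
  filter_upwards [ae_restrict_mem measurableSet_Ioi] with y hy
  exact integral_Ioc_frullaniKernel (ne_of_gt hy)

theorem integral_frullani_cexp (hν : 0 < ν) (hw : w.re < ν) :
    ∫ y in Ioi (0 : ℝ), (cexp (y * w) - 1) * ((Real.exp (-ν * y) * y⁻¹ : ℝ) : ℂ)
      = log ν - log (ν - w) := by
  calc _ = ∫ y in Ioi (0 : ℝ), ∫ t in Ioc (0 : ℝ) 1, frullaniKernel ν w y t :=
        setIntegral_congr_fun measurableSet_Ioi fun y hy =>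
          (integral_Ioc_frullaniKernel (ne_of_gt hy)).symm
    _ = ∫ t in Ioc (0 : ℝ) 1, ∫ y in Ioi (0 : ℝ), frullaniKernel ν w y t :=
        integral_integral_swap (integrable_frullaniKernel hν hw)
    _ = ∫ t in (0 : ℝ)..1, w / (ν - t * w) := by
        rw [intervalIntegral.integral_of_le zero_le_one]
        exact setIntegral_congr_fun measurableSet_Ioc fun t ht =>
          integral_Ioi_frullaniKernel hν hw (Ioc_subset_Icc_self ht)
    _ = log ν - log (ν - w) := intervalIntegral_div_sub_mul fun t ht =>
        mem_slitPlane_iff.2 <| Or.inl <| by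
          rw [sub_re, ofReal_re]
          linarith [re_ofReal_mul_le_max_zero ht w, max_lt hw hν]

end Frullani

/-- The `α_R = 0` (Variance-Gamma type) special case of the symbol identity for the
right tail of the GTSP/CGMY/KoBoL model: for `ν > 1` and `Re z < ν`,
`∫_0^∞ [e^{yz} - 1 - (e^y - 1) z] e^{-ν y} y^{-1} dy
  = log ν - log (ν - z) + z log ((ν - 1)/ν)`,
where `log` is the principal complex logarithm. -/
theorem stmt_8 (ν : ℝ) (hν : 1 < ν) (z : ℂ) (hz : z.re < ν) :
    ∫ y in Set.Ioi (0 : ℝ),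
        (Complex.exp ((y : ℂ) * z) - 1 - (Complex.exp (y : ℂ) - 1) * z) *
          ((Real.exp (-ν * y) * y⁻¹ : ℝ) : ℂ)
      = Complex.log (ν : ℂ) - Complex.log ((ν : ℂ) - z) +
          z * Complex.log (((ν : ℂ) - 1) / (ν : ℂ)) := by
  have hν₀ : 0 < ν := zero_lt_one.trans hν
  have hone : (1 : ℂ).re < ν := by simpa using hν
  have hsplit : ∀ y : ℝ,
      (cexp (y * z) - 1 - (cexp y - 1) * z) * ((Real.exp (-ν * y) * y⁻¹ : ℝ) : ℂ)
        = (cexp (y * z) - 1) * ((Real.exp (-ν * y) * y⁻¹ : ℝ) : ℂ)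
          - z * ((cexp (y * 1) - 1) * ((Real.exp (-ν * y) * y⁻¹ : ℝ) : ℂ)) := fun y => by
    rw [mul_one]; ring
  have hlog : log (((ν : ℂ) - 1) / ν) = log (ν - 1) - log ν := by
    have hν₁ : (ν : ℂ) - 1 ≠ 0 := sub_ne_zero.2 (ofReal_ne_one.2 hν.ne')
    rw [div_eq_mul_inv, ← ofReal_inv, log_mul_ofReal _ (inv_pos.2 hν₀) _ hν₁, Real.log_inv,
      ofReal_neg, ofReal_log hν₀.le]
    ring
  simp only [hsplit]
  rw [integral_sub (integrableOn_frullani_cexp hν₀ hz)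
      ((integrableOn_frullani_cexp hν₀ hone).const_mul z), integral_const_mul,
    integral_frullani_cexp hν₀ hz, integral_frullani_cexp hν₀ hone, hlog]
  ring
end

section
/- Let n ≥ 1, let S be the n×n shift matrix (S has entry 1 in positions (i, i+1) and 0 elsewhere), and let ε > 0, a > 0, b > 0. Then the upper-triangular Toeplitz matrix B₁ = ε·I + a·S − b·S² is eventually nonnegative: there exists a positive integer k₀ such that for every k ≥ k₀ the matrix B₁^k is entrywise nonnegative. (This is the key step in the proof of Lemma 2: with a = 2, b = 1 and small ε it shows that A^F_2 + bI is eventually nonnegative for b = 3/(2h) + ε.) -/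
/-!
Since `B₁ = P(S)` with `P = ε + a X - b X²`, the `(i, j)` entry of `B₁ ^ k` is the coefficient of
`X ^ (j - i)` in `P ^ k` (and `0` below the diagonal). Factoring `P = ε (1 + X q)` with
`q(0) = a / ε`, the binomial theorem gives
`[X^d] (1 + X q)^k = ∑_{m ≤ d} [X^(d-m)] q^m * C(k, m)`, whose top coefficient is `(a / ε)^d > 0`.
Since `C(k, m) = o(C(k, d))` for `m < d`, the top term wins for large `k`.
-/

open Filter Asymptotics Finset Polynomial

theorem Nat.choose_isLittleO_choose {m d : ℕ} (h : m < d) :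
    (fun k : ℕ => (k.choose m : ℝ)) =o[atTop] fun k => (k.choose d : ℝ) := by
  simp_rw [Nat.cast_choose_eq_descPochhammer_div, div_eq_inv_mul]
  have hdeg : (descPochhammer ℝ m).degree < (descPochhammer ℝ d).degree := by
    rw [degree_eq_natDegree (monic_descPochhammer ℝ m).ne_zero,
      degree_eq_natDegree (monic_descPochhammer ℝ d).ne_zero,
      descPochhammer_natDegree, descPochhammer_natDegree]
    exact_mod_cast h
  exact ((isLittleO_atTop_of_degree_lt _ _ hdeg).comp_tendsto tendsto_natCast_atTop_atTop
    |>.const_mul_left _).const_mul_right (by positivity)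

theorem eventually_pos_sum_mul_choose (c : ℕ → ℝ) {d : ℕ} (hd : 0 < c d) :
    ∀ᶠ k : ℕ in atTop, 0 < ∑ m ∈ range (d + 1), c m * k.choose m := by
  have hlow : (fun k : ℕ => ∑ m ∈ range d, c m * k.choose m) =o[atTop]
      fun k => (k.choose d : ℝ) :=
    IsLittleO.fun_sum fun m hm => (Nat.choose_isLittleO_choose (mem_range.1 hm)).const_mul_left _
  filter_upwards [hlow.bound (half_pos hd), eventually_ge_atTop d] with k hk hkd
  have hpos : (0 : ℝ) < k.choose d := by exact_mod_cast Nat.choose_pos hkd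
  rw [Real.norm_eq_abs, Real.norm_of_nonneg hpos.le] at hk
  rw [sum_range_succ]
  nlinarith [neg_abs_le (∑ m ∈ range d, c m * k.choose m)]

theorem Polynomial.coeff_one_add_X_mul_pow {R : Type*} [CommSemiring R] (q : R[X]) (k d : ℕ) :
    ((1 + X * q) ^ k).coeff d = ∑ m ∈ range (d + 1), (q ^ m).coeff (d - m) * k.choose m := by
  have hterm : ∀ m, ((X * q) ^ m * 1 ^ (k - m) * (k.choose m : R[X])).coeff d =
      if m ≤ d then (q ^ m).coeff (d - m) * k.choose m else 0 := by
    intro m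
    rw [one_pow, mul_one, mul_pow, ← Polynomial.C_eq_natCast, coeff_mul_C, coeff_X_pow_mul']
    split_ifs <;> simp
  rw [add_comm, add_pow, finsetSum_coeff]
  simp_rw [hterm]
  rw [← sum_filter]
  refine sum_subset_zero_on_sdiff ?_ ?_ fun _ _ => rfl
  · intro m; simp only [mem_filter, mem_range]; omega
  · intro m hm
    obtain ⟨hmd, hmk⟩ := mem_sdiff.1 hm
    simp only [mem_filter, mem_range] at hmd hmk
    rw [Nat.choose_eq_zero_of_lt (by omega), Nat.cast_zero, mul_zero]

theorem Polynomial.eventually_coeff_pow_pos (P : ℝ[X]) (h0 : 0 < P.coeff 0)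
    (h1 : 0 < P.coeff 1) (d : ℕ) : ∀ᶠ k : ℕ in atTop, 0 < (P ^ k).coeff d := by
  set q := C (P.coeff 0)⁻¹ * P.divX
  have hP : P = C (P.coeff 0) * (1 + X * q) := by
    have hunit : C (P.coeff 0) * C (P.coeff 0)⁻¹ = 1 := by
      rw [← C_mul, mul_inv_cancel₀ h0.ne', C_1]
    linear_combination (X_mul_divX_add P).symm - X * P.divX * hunit
  have hq : 0 < (q ^ d).coeff 0 := by
    rw [coeff_zero_eq_eval_zero, eval_pow, ← coeff_zero_eq_eval_zero, coeff_C_mul, coeff_divX]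
    positivity
  filter_upwards [eventually_pos_sum_mul_choose (d := d) (fun m => (q ^ m).coeff (d - m))
    (by simpa using hq)] with k hk
  rw [hP, mul_pow, ← C_pow, coeff_C_mul, coeff_one_add_X_mul_pow]
  positivity

def shiftMatrix (R : Type*) [Zero R] [One R] (n : ℕ) : Matrix (Fin n) (Fin n) R :=
  Matrix.of fun i j => if (j : ℕ) = i + 1 then 1 else 0

section ShiftMatrix

variable {R : Type*} {n : ℕ}

theorem shiftMatrix_apply [Zero R] [One R] (i j : Fin n) :
    shiftMatrix R n i j = if (j : ℕ) = i + 1 then 1 else 0 :=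
  rfl

theorem shiftMatrix_pow_apply [Semiring R] (m : ℕ) (i j : Fin n) :
    (shiftMatrix R n ^ m) i j = if (j : ℕ) = i + m then 1 else 0 := by
  induction m generalizing i with
  | zero => simp [Matrix.one_apply, Fin.ext_iff, eq_comm]
  | succ m ih =>
    rw [pow_succ', Matrix.mul_apply]
    simp only [shiftMatrix_apply, ih, boole_mul]
    rw [Fin.sum_univ_eq_sum_range (fun l => if l = (i : ℕ) + 1 then
      (if (j : ℕ) = l + m then (1 : R) else 0) else 0), sum_ite_eq']
    split_ifs <;> rw [mem_range] at * <;> omega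

theorem aeval_shiftMatrix_apply [CommSemiring R] (Q : R[X]) (i j : Fin n) :
    aeval (shiftMatrix R n) Q i j = if (i : ℕ) ≤ j then Q.coeff (j - i) else 0 := by
  induction Q using Polynomial.induction_on' with
  | add p q hp hq => simp only [map_add, Matrix.add_apply, hp, hq, coeff_add]; split_ifs <;> simp
  | monomial m r =>
    rw [aeval_monomial, Algebra.algebraMap_eq_smul_one, smul_mul_assoc, one_mul,
      Matrix.smul_apply, shiftMatrix_pow_apply, coeff_monomial]
    split_ifs <;> first | omega | simp

end ShiftMatrix

theorem stmt_12_general (n : ℕ) (ε a b : ℝ) (hε : 0 < ε) (ha : 0 < a) :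
    let S : Matrix (Fin n) (Fin n) ℝ :=
      Matrix.of fun i j => if (j : ℕ) = (i : ℕ) + 1 then 1 else 0
    let B₁ : Matrix (Fin n) (Fin n) ℝ :=
      ε • (1 : Matrix (Fin n) (Fin n) ℝ) + a • S - b • S ^ 2
    ∃ k₀ : ℕ, 0 < k₀ ∧ ∀ k ≥ k₀, ∀ i j, 0 ≤ (B₁ ^ k) i j := by
  intro S B₁
  set P : ℝ[X] := C ε + C a * X - C b * X ^ 2
  have hB : B₁ = aeval (shiftMatrix ℝ n) P := by
    simp [P, Algebra.algebraMap_eq_smul_one, B₁, S, shiftMatrix]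
  have hentry : ∀ i j, ∀ᶠ k in atTop, 0 ≤ (B₁ ^ k) i j := by
    intro i j
    simp_rw [hB, ← map_pow, aeval_shiftMatrix_apply]
    split_ifs
    · exact (P.eventually_coeff_pow_pos (by simp [P, hε]) (by simp [P, ha]) _).mono
        fun _ => le_of_lt
    · exact .of_forall fun _ => le_rfl
  obtain ⟨k₀, hk₀⟩ := eventually_atTop.1 (eventually_all.2 fun i => eventually_all.2 (hentry i))
  exact ⟨k₀ + 1, k₀.succ_pos, fun k hk => hk₀ k (by omega)⟩

/-- Key step in the proof of Lemma 2: the upper-triangular Toeplitz matrix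
`B₁ = ε•I + a•S - b•S²` (with `S` the shift matrix and `ε, a, b > 0`) is eventually
nonnegative: there is a positive integer `k₀` such that `B₁^k` is entrywise
nonnegative for all `k ≥ k₀`. -/
theorem stmt_12 (n : ℕ) (hn : 1 ≤ n) (ε a b : ℝ) (hε : 0 < ε) (ha : 0 < a)
    (hb : 0 < b) :
    let S : Matrix (Fin n) (Fin n) ℝ :=
      Matrix.of fun i j => if (j : ℕ) = (i : ℕ) + 1 then 1 else 0
    let B₁ : Matrix (Fin n) (Fin n) ℝ :=
      ε • (1 : Matrix (Fin n) (Fin n) ℝ) + a • S - b • S ^ 2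
    ∃ k₀ : ℕ, 0 < k₀ ∧ ∀ k ≥ k₀, ∀ i j, 0 ≤ (B₁ ^ k) i j :=
  stmt_12_general n ε a b hε ha
end

section
/- Let n ≥ 1, ν > 0 and h > 0 with h·ν ≤ 1, and let M₁ be the n×n tridiagonal Toeplitz matrix with ν² − 2/h² on the main diagonal, ν/h + 1/h² on the first subdiagonal, and −ν/h + 1/h² on the first superdiagonal (zeros elsewhere); M₁ is the discretization A^C_2 + ν²·I − 2ν·A^C of the operator (ν − ∇)² by central differences. Then M₁ is the negative of an M-matrix: all off-diagonal entries of M₁ are nonnegative (M₁ is Metzler) and every complex eigenvalue of M₁ has strictly negative real part. (This is the first step in the proof of Proposition 6 for the CGMY model with 1 < α_R < 2.) -/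
/-!
`M₁` is the tridiagonal Toeplitz matrix with diagonal `a = ν² - 2/h²`, subdiagonal `b > 0` and
superdiagonal `c ≥ 0` (the latter exactly because `hν ≤ 1`), so it is Metzler. Conjugating by
`diag(sⁱ)` turns the off-diagonals into `s b` and `c / s` without changing the spectrum, and
Gershgorin's theorem then puts every eigenvalue in the disc about `a` of radius `s b + c / s`.
For `s = -a / (2b)` this radius is `-a/2 + 2bc/(-a) < -a`, since `a² - 4bc = ν⁴ > 0`.
-/

open Matrix

theorem Finset.sum_ite_zero_le {ι : Type*} (s : Finset ι) (p : ι → Prop) [DecidablePred p]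
    (hp : ∀ i j, p i → p j → i = j) {x : ℝ} (hx : 0 ≤ x) :
    ∑ i ∈ s, (if p i then x else 0) ≤ x := by
  rw [← Finset.sum_filter, Finset.sum_const, nsmul_eq_mul]
  have hcard : (s.filter p).card ≤ 1 :=
    Finset.card_le_one.mpr fun i hi j hj =>
      hp i j (Finset.mem_filter.mp hi).2 (Finset.mem_filter.mp hj).2
  exact mul_le_of_le_one_left hx (by exact_mod_cast hcard)

namespace Matrix

def tridiagToeplitz {R : Type*} [Zero R] (n : ℕ) (a b c : R) : Matrix (Fin n) (Fin n) R :=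
  of fun i j =>
    if i = j then a
    else if (i : ℕ) = (j : ℕ) + 1 then b
    else if (j : ℕ) = (i : ℕ) + 1 then c
    else 0

variable {n : ℕ}

theorem tridiagToeplitz_nonneg_of_ne {R : Type*} [Zero R] [Preorder R] {a b c : R}
    (hb : 0 ≤ b) (hc : 0 ≤ c) {i j : Fin n} (hij : i ≠ j) :
    0 ≤ tridiagToeplitz n a b c i j := by
  simp only [tridiagToeplitz, of_apply, if_neg hij]
  split_ifs <;> first | assumption | exact le_rfl

theorem tridiagToeplitz_map {R S : Type*} [Zero R] [Zero S] (a b c : R) {f : R → S}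
    (hf : f 0 = 0) : (tridiagToeplitz n a b c).map f = tridiagToeplitz n (f a) (f b) (f c) := by
  ext i j
  simp only [tridiagToeplitz, map_apply, of_apply]
  split_ifs <;> first | rfl | exact hf

theorem diagonal_pow_mul_tridiagToeplitz_mul_diagonal_inv {K : Type*} [Field K] (a b c : K)
    {s : K} (hs : s ≠ 0) :
    diagonal (fun i : Fin n => s ^ (i : ℕ)) * tridiagToeplitz n a b c *
        diagonal (fun i : Fin n => (s ^ (i : ℕ))⁻¹) =
      tridiagToeplitz n a (s * b) (s⁻¹ * c) := by
  ext i j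
  simp only [diagonal_mul, mul_diagonal, tridiagToeplitz, of_apply]
  split_ifs with hij hi hj
  · subst hij; field_simp
  · rw [hi, pow_succ]; field_simp
  · rw [hj, pow_succ]; field_simp
  · simp

theorem spectrum_tridiagToeplitz_rescale {K : Type*} [Field K] (a b c : K) {s : K} (hs : s ≠ 0) :
    spectrum K (tridiagToeplitz n a (s * b) (s⁻¹ * c)) =
      spectrum K (tridiagToeplitz n a b c) := by
  have hd : ∀ i : Fin n, s ^ (i : ℕ) ≠ 0 := fun i => pow_ne_zero _ hs
  let u : (Matrix (Fin n) (Fin n) K)ˣ :=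
    { val := diagonal fun i => s ^ (i : ℕ)
      inv := diagonal fun i => (s ^ (i : ℕ))⁻¹
      val_inv := by simp [diagonal_mul_diagonal, hd]
      inv_val := by simp [diagonal_mul_diagonal, hd] }
  rw [← diagonal_pow_mul_tridiagToeplitz_mul_diagonal_inv a b c hs]
  exact spectrum.units_conjugate (u := u)

theorem norm_sub_le_of_mem_spectrum_tridiagToeplitz {K : Type*} [NormedField K] {a b c μ : K}
    (hμ : μ ∈ spectrum K (tridiagToeplitz n a b c)) : ‖μ - a‖ ≤ ‖b‖ + ‖c‖ := by
  rw [← spectrum_toLin', ← Module.End.hasEigenvalue_iff_mem_spectrum] at hμ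
  obtain ⟨k, hk⟩ := eigenvalue_mem_ball hμ
  have hkk : tridiagToeplitz n a b c k k = a := if_pos rfl
  rw [hkk, Metric.mem_closedBall, dist_eq_norm] at hk
  refine hk.trans ?_
  calc ∑ j ∈ Finset.univ.erase k, ‖tridiagToeplitz n a b c k j‖
      ≤ ∑ j ∈ Finset.univ.erase k, ((if (k : ℕ) = j + 1 then ‖b‖ else 0) +
          (if (j : ℕ) = k + 1 then ‖c‖ else 0)) := by
        refine Finset.sum_le_sum fun j hj => ?_
        simp only [tridiagToeplitz, of_apply, if_neg (Finset.ne_of_mem_erase hj).symm]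
        split_ifs <;> first | omega | simp
    _ ≤ ‖b‖ + ‖c‖ := by
        rw [Finset.sum_add_distrib]
        gcongr
        · exact Finset.sum_ite_zero_le _ _ (fun i j hi hj => Fin.ext (by omega)) (norm_nonneg b)
        · exact Finset.sum_ite_zero_le _ _ (fun i j hi hj => Fin.ext (by omega)) (norm_nonneg c)

theorem re_le_of_mem_spectrum_tridiagToeplitz {a b c : ℝ} {s : ℝ} (hs : 0 < s) {μ : ℂ}
    (hμ : μ ∈ spectrum ℂ ((tridiagToeplitz n a b c).map Complex.ofReal)) :
    μ.re ≤ a + s * |b| + |c| / s := by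
  have hs' : (s : ℂ) ≠ 0 := by exact_mod_cast hs.ne'
  rw [tridiagToeplitz_map _ _ _ Complex.ofReal_zero,
    ← spectrum_tridiagToeplitz_rescale _ _ _ hs'] at hμ
  calc μ.re = a + (μ - a).re := by simp
    _ ≤ a + ‖μ - a‖ := by gcongr; exact Complex.re_le_norm _
    _ ≤ a + (‖(s : ℂ) * b‖ + ‖(s : ℂ)⁻¹ * c‖) := by
        gcongr; exact norm_sub_le_of_mem_spectrum_tridiagToeplitz hμ
    _ = a + s * |b| + |c| / s := by
        simp only [norm_mul, norm_inv, Complex.norm_real, Real.norm_eq_abs, abs_of_pos hs]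
        ring

theorem re_neg_of_mem_spectrum_tridiagToeplitz {a b c : ℝ} (ha : a < 0) (hb : b ≠ 0)
    (hbc : 4 * |b| * |c| < a ^ 2) {μ : ℂ}
    (hμ : μ ∈ spectrum ℂ ((tridiagToeplitz n a b c).map Complex.ofReal)) : μ.re < 0 := by
  have hb' : 0 < |b| := abs_pos.mpr hb
  have hs : 0 < -a / (2 * |b|) := div_pos (neg_pos.mpr ha) (by positivity)
  refine (re_le_of_mem_spectrum_tridiagToeplitz hs hμ).trans_lt ?_
  have hsup : |c| / (-a / (2 * |b|)) < -a / 2 := by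
    rw [div_lt_iff₀ hs]
    field_simp
    nlinarith
  have hsub : -a / (2 * |b|) * |b| = -a / 2 := by field_simp
  linarith

end Matrix

theorem stmt_15_general (n : ℕ) (ν h : ℝ) (hν : 0 < ν) (hh : 0 < h)
    (hhν : h * ν ≤ 1) :
    let M₁ : Matrix (Fin n) (Fin n) ℝ := Matrix.of fun i j =>
      if i = j then ν ^ 2 - 2 / h ^ 2
      else if (i : ℕ) = (j : ℕ) + 1 then ν / h + 1 / h ^ 2
      else if (j : ℕ) = (i : ℕ) + 1 then -(ν / h) + 1 / h ^ 2
      else 0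
    (∀ i j, i ≠ j → 0 ≤ M₁ i j) ∧
      ∀ μ ∈ spectrum ℂ (M₁.map Complex.ofReal), μ.re < 0 := by
  intro M₁
  have hsub : 0 < ν / h + 1 / h ^ 2 := by positivity
  have hνh : ν ≤ 1 / h := by rw [le_div_iff₀ hh]; linarith
  have hsup : 0 ≤ -(ν / h) + 1 / h ^ 2 := by
    rw [div_eq_mul_one_div ν, ← _root_.one_div_pow]
    nlinarith
  have hdiag : ν ^ 2 - 2 / h ^ 2 < 0 := by
    rw [div_eq_mul_one_div 2, ← _root_.one_div_pow]
    nlinarith [one_div_pos.mpr hh]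
  have hdisc :
      (ν ^ 2 - 2 / h ^ 2) ^ 2 - 4 * (ν / h + 1 / h ^ 2) * (-(ν / h) + 1 / h ^ 2) = ν ^ 4 := by
    field_simp; ring
  refine ⟨fun i j hij => tridiagToeplitz_nonneg_of_ne hsub.le hsup hij, fun μ hμ => ?_⟩
  refine re_neg_of_mem_spectrum_tridiagToeplitz hdiag hsub.ne' ?_ hμ
  rw [abs_of_pos hsub, abs_of_nonneg hsup]
  nlinarith [pow_pos hν 4]

/-- First step in the proof of Proposition 6 for the CGMY model with `1 < α_R < 2`:
the central-difference discretization `M₁ = A^C_2 + ν²•I - 2ν•A^C` of `(ν - ∇)²`,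
i.e. the tridiagonal Toeplitz matrix with `ν² - 2/h²` on the diagonal, `ν/h + 1/h²`
on the subdiagonal and `-ν/h + 1/h²` on the superdiagonal, is (given `h·ν ≤ 1`) the
negative of an M-matrix: it is Metzler (nonnegative off-diagonal entries) and all of
its complex eigenvalues have strictly negative real part. -/
theorem stmt_15 (n : ℕ) (hn : 1 ≤ n) (ν h : ℝ) (hν : 0 < ν) (hh : 0 < h)
    (hhν : h * ν ≤ 1) :
    let M₁ : Matrix (Fin n) (Fin n) ℝ := Matrix.of fun i j =>
      if i = j then ν ^ 2 - 2 / h ^ 2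
      else if (i : ℕ) = (j : ℕ) + 1 then ν / h + 1 / h ^ 2
      else if (j : ℕ) = (i : ℕ) + 1 then -(ν / h) + 1 / h ^ 2
      else 0
    (∀ i j, i ≠ j → 0 ≤ M₁ i j) ∧
      ∀ μ ∈ spectrum ℂ (M₁.map Complex.ofReal), μ.re < 0 :=
  stmt_15_general n ν h hν hh hhν
end
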